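/- Fix γ > 0 and let ψ̂^m(z) = ((1+z)/2)·(1 + γ(1−z)/(m(1+z)))^{−m} for integers m ≥ 1. Then Kolmogorov's geometric-mean formula evaluates exactly: σ_S²(ψ̂^m) := exp((1/2π)∫_{−π}^{π} log|ψ̂^m(e^{−iλ})|² dλ) = (1/4)·(1 + γ/m)^{−2m} = ψ̂^m(0)². Moreover, there exists C > 0 depending only on γ such that for all m ≥ 1, |(1/4)(1 + γ/m)^{−2m} − (1/4)e^{−2γ}| ≤ C/m; hence |σ_S²(ψ̂^m) − σ_S*²| ≤ C/m where σ_S*² = e^{−2γ}/4. -/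

import Mathlib

open MeasureTheory intervalIntegral

/-- The ARMA approximation `ψ̂^m(z) = ((1+z)/2)(1 + γ(1−z)/(m(1+z)))^{−m}`. -/
noncomputable def psiHatFn (γ : ℝ) (m : ℕ) : ℂ → ℂ := fun z =>
  ((1 + z) / 2) * ((1 + (γ : ℂ) * (1 - z) / ((m : ℂ) * (1 + z)))⁻¹) ^ m

/-- Supplier's MSFE of a circle function via Kolmogorov's formula. -/
noncomputable def sigmaS2c (F : ℝ → ℂ) : ℝ :=
  Real.exp ((1 / (2 * Real.pi)) * ∫ l in (-Real.pi)..Real.pi, Real.log (‖F l‖ ^ 2))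

/-
On the unit disc `ψ̂^m` is meromorphic, and analytic without zeros on the open disc: its only zero
`z = -1` lies on the circle and its poles lie outside the closed disc. Kolmogorov's
integral is twice the circle average of `log ‖ψ̂^m‖` over the unit circle, which Jensen's formula
evaluates to `log ‖ψ̂^m(0)‖`: zeros on the circle carry weight `log 1 = 0`.

For the rate, write `(1 + γ/m)^(-2m) = exp (-2m log (1 + γ/m))`; since `exp` is `1`-Lipschitz on
`(-∞, 0]` and `0 ≤ t - log (1 + t) ≤ t²/2` for `t ≥ 0`, the distance to `exp (-2γ)` is at most
`γ²/m`.
-/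

open Metric Real

theorem MeromorphicOn.circleAverage_log_norm_of_analyticOnNhd_ball {c : ℂ} {R : ℝ} {f : ℂ → ℂ}
    (hR : 0 < R) (hf : MeromorphicOn f (closedBall c R)) (hf_an : AnalyticOnNhd ℂ f (ball c R))
    (hf_ne : ∀ z ∈ ball c R, f z ≠ 0) :
    circleAverage (fun z => log ‖f z‖) c R = log ‖f c‖ := by
  have hc : c ∈ ball c R := mem_ball_self hR
  have hR' : |R| = R := abs_of_pos hR
  rw [← hR'] at hf
  have hdiv : ∀ z ∈ ball c R, divisor f (closedBall c |R|) z = 0 := by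
    intro z hz
    rw [hf.divisor_apply (by rw [hR']; exact ball_subset_closedBall hz),
      (hf_an z hz).meromorphicNFAt.meromorphicOrderAt_eq_zero_iff.mpr (hf_ne z hz)]
    rfl
  rw [hf.circleAverage_log_norm hR.ne', hdiv c hc,
    (hf_an c hc).meromorphicTrailingCoeffAt_of_ne_zero (hf_ne c hc), Int.cast_zero, zero_mul,
    add_zero, add_eq_right]
  refine finsum_eq_zero_of_forall_eq_zero fun u => ?_
  by_cases hu : u ∈ ball c R
  · rw [hdiv u hu, Int.cast_zero, zero_mul]
  · by_cases hu' : u ∈ closedBall c |R|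
    · rw [hR'] at hu'
      have : ‖c - u‖ = R := by
        rw [← dist_eq_norm, dist_comm]
        exact le_antisymm hu' (not_lt.mp hu)
      rw [this, mul_inv_cancel₀ hR.ne', log_one, mul_zero]
    · rw [Function.locallyFinsuppWithin.apply_eq_zero_of_notMem _ hu', Int.cast_zero, zero_mul]

theorem sigmaS2c_comp_exp_neg_mul_I (f : ℂ → ℂ) :
    sigmaS2c (fun l => f (Complex.exp (-Complex.I * l))) =
      exp (2 * circleAverage (fun z => log ‖f z‖) 0 1) := by
  set g : ℝ → ℝ := fun θ => log ‖f (circleMap 0 1 θ)‖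
  have hg : Function.Periodic g (2 * π) := fun θ => by simp [g, periodic_circleMap 0 1 θ]
  have hreflect : ∀ l : ℝ, log (‖f (Complex.exp (-Complex.I * l))‖ ^ 2) = 2 * g (-l) := by
    intro l
    simp [g, circleMap, log_pow, mul_comm]
  have hshift : ∫ θ in (-π)..π, g θ = ∫ θ in 0..2 * π, g θ := by
    have := hg.intervalIntegral_add_eq (-π) 0
    rwa [show -π + 2 * π = π by ring, zero_add] at this
  rw [sigmaS2c, circleAverage_def, smul_eq_mul]
  simp_rw [hreflect, intervalIntegral.integral_const_mul, intervalIntegral.integral_comp_neg g,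
    neg_neg, hshift]
  congr 1
  ring

theorem sigmaS2c_eq_norm_sq_of_analyticOnNhd_ball {f : ℂ → ℂ}
    (hf : MeromorphicOn f (closedBall 0 1)) (hf_an : AnalyticOnNhd ℂ f (ball 0 1))
    (hf_ne : ∀ z ∈ ball 0 1, f z ≠ 0) :
    sigmaS2c (fun l => f (Complex.exp (-Complex.I * l))) = ‖f 0‖ ^ 2 := by
  have h0 : f 0 ≠ 0 := hf_ne 0 (mem_ball_self one_pos)
  rw [sigmaS2c_comp_exp_neg_mul_I,
    hf.circleAverage_log_norm_of_analyticOnNhd_ball one_pos hf_an hf_ne, ← exp_log (pow_pos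
    (norm_pos_iff.mpr h0) 2), log_pow, Nat.cast_ofNat]

theorem one_add_ne_zero_of_norm_lt_one {R : Type*} [NormedRing R] [NormOneClass R] {z : R}
    (hz : ‖z‖ < 1) : 1 + z ≠ 0 := by
  intro h
  rw [← neg_eq_of_add_eq_zero_right h, norm_neg, norm_one] at hz
  exact hz.false

theorem one_add_mul_div_ne_zero {a γ : ℝ} (ha : 0 < a) (hγ : 0 < γ) {z : ℂ} (hz : ‖z‖ < 1) :
    1 + (γ : ℂ) * (1 - z) / (a * (1 + z)) ≠ 0 := by
  have hz1 : 1 + z ≠ 0 := one_add_ne_zero_of_norm_lt_one hz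
  have ha' : (a : ℂ) ≠ 0 := Complex.ofReal_ne_zero.mpr ha.ne'
  rw [one_add_div (mul_ne_zero ha' hz1), div_ne_zero_iff]
  refine ⟨fun h => ?_, mul_ne_zero ha' hz1⟩
  have hsum : ((a + γ : ℝ) : ℂ) = -((a - γ : ℝ) * z) := by
    push_cast; linear_combination h
  have hnorm := congrArg norm hsum
  rw [norm_neg, norm_mul, Complex.norm_real, Complex.norm_real, Real.norm_eq_abs,
    Real.norm_eq_abs, abs_of_pos (by linarith)] at hnorm
  have hlt : |a - γ| < a + γ := abs_sub_lt_iff.mpr ⟨by linarith, by linarith⟩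
  nlinarith [abs_nonneg (a - γ), norm_nonneg z]

theorem psiHatFn_zero (γ : ℝ) (m : ℕ) :
    psiHatFn γ m 0 = ((1 / 2 * ((1 + γ / m) ^ m)⁻¹ : ℝ) : ℂ) := by
  simp [psiHatFn]

theorem sigmaS2c_psiHatFn {γ : ℝ} (hγ : 0 < γ) {m : ℕ} (hm : 0 < m) :
    sigmaS2c (fun l => psiHatFn γ m (Complex.exp (-Complex.I * l))) =
      1 / 4 * ((1 + γ / m) ^ (2 * m))⁻¹ := by
  have hz1 : ∀ z ∈ ball (0 : ℂ) 1, 1 + z ≠ 0 := fun z hz =>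
    one_add_ne_zero_of_norm_lt_one (mem_ball_zero_iff.mp hz)
  have hmz : ∀ z ∈ ball (0 : ℂ) 1, (m : ℂ) * (1 + z) ≠ 0 := fun z hz =>
    mul_ne_zero (Nat.cast_ne_zero.mpr hm.ne') (hz1 z hz)
  have hden : ∀ z ∈ ball (0 : ℂ) 1, 1 + (γ : ℂ) * (1 - z) / ((m : ℂ) * (1 + z)) ≠ 0 := by
    intro z hz
    simpa using one_add_mul_div_ne_zero (Nat.cast_pos.mpr hm) hγ (mem_ball_zero_iff.mp hz)
  -- `psiHatFn γ m (-1)` is a junk value, so on the closed disc `ψ̂^m` is only meromorphic.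
  have hmero : MeromorphicOn (psiHatFn γ m) (closedBall 0 1) := fun z _ => by
    unfold psiHatFn; fun_prop
  have han : AnalyticOnNhd ℂ (psiHatFn γ m) (ball 0 1) := fun z hz => by
    have := hmz z hz
    have := hden z hz
    unfold psiHatFn; fun_prop (disch := assumption)
  have hne : ∀ z ∈ ball (0 : ℂ) 1, psiHatFn γ m z ≠ 0 := fun z hz =>
    mul_ne_zero (div_ne_zero (hz1 z hz) two_ne_zero) (pow_ne_zero _ (inv_ne_zero (hden z hz)))
  rw [sigmaS2c_eq_norm_sq_of_analyticOnNhd_ball hmero han hne, psiHatFn_zero, Complex.norm_real,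
    norm_eq_abs, sq_abs, mul_pow, inv_pow, ← pow_mul]
  ring

theorem exp_sub_exp_le_sub_of_nonpos {a b : ℝ} (hba : b ≤ a) (ha : a ≤ 0) :
    exp a - exp b ≤ a - b := by
  calc exp a - exp b = exp a * (1 - exp (b - a)) := by rw [mul_sub, ← exp_add]; ring_nf
    _ ≤ 1 * (a - b) := mul_le_mul (exp_le_one_iff.mpr ha) (by linarith [add_one_le_exp (b - a)])
        (sub_nonneg.mpr (exp_le_one_iff.mpr (by linarith))) zero_le_one
    _ = a - b := one_mul _

theorem abs_inv_one_add_div_pow_sub_exp_le {γ : ℝ} (hγ : 0 ≤ γ) {m : ℕ} (hm : 0 < m) :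
    |((1 + γ / m) ^ (2 * m))⁻¹ - exp (-2 * γ)| ≤ γ ^ 2 / m := by
  have hm' : (0 : ℝ) < m := Nat.cast_pos.mpr hm
  obtain ⟨t, ht0, rfl⟩ : ∃ t : ℝ, 0 ≤ t ∧ γ = m * t := ⟨γ / m, by positivity, by field_simp⟩
  have hpow : ((1 + m * t / m) ^ (2 * m))⁻¹ = exp (-(2 * m * log (1 + t))) := by
    rw [mul_div_cancel_left₀ t hm'.ne', exp_neg,
      ← exp_log (by positivity : (0 : ℝ) < (1 + t) ^ (2 * m)), log_pow]
    push_cast; ring_nf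
  have hL_le : log (1 + t) ≤ t := by linarith [log_le_sub_one_of_pos (by linarith : 0 < 1 + t)]
  have hL_ge : 2 * t / (t + 2) ≤ log (1 + t) := le_log_one_add_of_nonneg ht0
  have hgap : t - log (1 + t) ≤ t ^ 2 / 2 :=
    calc t - log (1 + t) ≤ t - 2 * t / (t + 2) := by linarith
      _ = t ^ 2 / (t + 2) := by field_simp; ring
      _ ≤ t ^ 2 / 2 := div_le_div_of_nonneg_left (sq_nonneg t) two_pos (by linarith)
  have hL0 : 0 ≤ log (1 + t) := le_trans (by positivity) hL_ge
  rw [hpow, abs_of_nonneg (sub_nonneg.mpr (exp_le_exp.mpr (by nlinarith)))]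
  calc exp (-(2 * m * log (1 + t))) - exp (-2 * (m * t)) ≤ -(2 * m * log (1 + t)) - -2 * (m * t) :=
        exp_sub_exp_le_sub_of_nonpos (by nlinarith) (by nlinarith)
    _ ≤ (m * t) ^ 2 / m := by
      rw [le_div_iff₀ hm']; nlinarith [mul_le_mul_of_nonneg_left hgap hm'.le]

/-- Kolmogorov's geometric-mean formula evaluates exactly for `ψ̂^m`:
`σ_S²(ψ̂^m) = (1/4)(1 + γ/m)^{−2m} = ψ̂^m(0)²`, and this converges to
`σ_S*² = e^{−2γ}/4` at rate `C/m`. -/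
theorem stmt_13 (γ : ℝ) (hγ : 0 < γ) :
    (∀ m : ℕ, 1 ≤ m →
      sigmaS2c (fun l => psiHatFn γ m (Complex.exp (-Complex.I * l))) =
        (1 / 4) * ((1 + γ / m) ^ (2 * m))⁻¹ ∧
      ((((1 / 4) * ((1 + γ / m) ^ (2 * m))⁻¹ : ℝ)) : ℂ) = (psiHatFn γ m 0) ^ 2) ∧
    ∃ C : ℝ, 0 < C ∧ ∀ m : ℕ, 1 ≤ m →
      |(1 / 4) * ((1 + γ / m) ^ (2 * m))⁻¹ - (1 / 4) * Real.exp (-2 * γ)| ≤ C / m ∧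
      |sigmaS2c (fun l => psiHatFn γ m (Complex.exp (-Complex.I * l))) -
        Real.exp (-2 * γ) / 4| ≤ C / m := by
  refine ⟨fun m hm => ⟨sigmaS2c_psiHatFn hγ hm, ?_⟩, γ ^ 2 / 4, by positivity, fun m hm => ?_⟩
  · rw [psiHatFn_zero]
    push_cast
    ring
  have hrate : |1 / 4 * ((1 + γ / m) ^ (2 * m))⁻¹ - 1 / 4 * exp (-2 * γ)| ≤ γ ^ 2 / 4 / m := by
    rw [← mul_sub, abs_mul, abs_of_pos (by norm_num : (0 : ℝ) < 1 / 4)]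
    calc 1 / 4 * |((1 + γ / m) ^ (2 * m))⁻¹ - exp (-2 * γ)| ≤ 1 / 4 * (γ ^ 2 / m) := by
          gcongr; exact abs_inv_one_add_div_pow_sub_exp_le hγ.le hm
      _ = γ ^ 2 / 4 / m := by ring
  refine ⟨hrate, ?_⟩
  rwa [sigmaS2c_psiHatFn hγ hm, div_eq_inv_mul (exp (-2 * γ)) 4, inv_eq_one_div (4 : ℝ)]
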